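/- arXiv:2309.02540 — 2 statements merged into one kernel-verified Lean document; each statement's English description precedes it below -/
import Mathlib

section
/- For an essentially bounded measurable function a on the Siegel domain D_{n+1}, a is invariant under the Heisenberg group action if and only if there exists a measurable function f on ℝ₊ such that a(z) = f(Im(z_{n+1}) − |z'|²) for all z ∈ D_{n+1}. -/
/-- The Heisenberg action of `ℍₙ` on `ℂ^{n+1} = ℂⁿ × ℂ`. -/
noncomputable def hact {n : ℕ} (h : (Fin n → ℂ) × ℝ) (z : (Fin n → ℂ) × ℂ) :
    (Fin n → ℂ) × ℂ :=
  (z.1 + h.1,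
    z.2 + (h.2 : ℂ) + 2 * Complex.I * (∑ j, z.1 j * (starRingEnd ℂ) (h.1 j))
      + Complex.I * ((∑ j, Complex.normSq (h.1 j) : ℝ) : ℂ))

/-- The Siegel domain `D_{n+1} ⊆ ℂⁿ × ℂ`. -/
def siegel (n : ℕ) : Set ((Fin n → ℂ) × ℂ) :=
  {z | (∑ j, Complex.normSq (z.1 j)) < z.2.im}

/-- The quantity `Im(z_{n+1}) − |z'|²` is invariant under the Heisenberg action. -/
lemma hact_invar {n : ℕ} (h : (Fin n → ℂ) × ℝ) (z : (Fin n → ℂ) × ℂ) :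
    ((hact h z).2).im - ∑ j, Complex.normSq ((hact h z).1 j)
      = z.2.im - ∑ j, Complex.normSq (z.1 j) := by
  have hs : ∑ j, Complex.normSq (z.1 j + h.1 j)
      = ∑ j, Complex.normSq (z.1 j) + ∑ j, Complex.normSq (h.1 j)
        + 2 * (∑ j, z.1 j * (starRingEnd ℂ) (h.1 j)).re := by
    rw [Complex.re_sum, Finset.mul_sum, ← Finset.sum_add_distrib, ← Finset.sum_add_distrib]
    exact Finset.sum_congr rfl fun j _ => by rw [Complex.normSq_add]
  have him : (2 * Complex.I * (∑ j, z.1 j * (starRingEnd ℂ) (h.1 j))).im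
      = 2 * (∑ j, z.1 j * (starRingEnd ℂ) (h.1 j)).re := by
    simp [Complex.mul_im]
  simp only [hact, Pi.add_apply, Complex.add_im, Complex.ofReal_im, Complex.mul_im,
    Complex.I_re, Complex.I_im, Complex.ofReal_re, him, hs]
  ring

/-- The special group element `(-z', -Re z_{n+1})` moves `z` to the point
`(0, i(Im z_{n+1} - |z'|²))`. -/
lemma hact_special {n : ℕ} (z : (Fin n → ℂ) × ℂ) :
    hact (-z.1, -z.2.re) z
      = (0, Complex.I * ((z.2.im - ∑ j, Complex.normSq (z.1 j) : ℝ) : ℂ)) := by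
  unfold hact
  refine Prod.ext (by simp) ?_
  simp only [Pi.neg_apply]
  have h1 : (∑ j, z.1 j * (starRingEnd ℂ) (-z.1 j))
      = -((∑ j, Complex.normSq (z.1 j) : ℝ) : ℂ) := by
    push_cast
    simp [Complex.mul_conj, Finset.sum_neg_distrib]
  simp only [h1]
  have h2 : (∑ j, Complex.normSq (-z.1 j) : ℝ) = (∑ j, Complex.normSq (z.1 j) : ℝ) := by simp
  rw [h2]
  apply Complex.ext <;> simp <;> ring

/-- A bounded measurable symbol `a` on the Siegel domain is `ℍₙ`-invariant if and
only if it factors (by a measurable function on `ℝ₊`) through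
`z ↦ Im(z_{n+1}) − |z'|²`. -/
theorem heisenberg_invariant_symbols (n : ℕ) (a : (Fin n → ℂ) × ℂ → ℂ)
    (ha : Measurable a) (C : ℝ) (hbd : ∀ z ∈ siegel n, ‖a z‖ ≤ C) :
    (∀ (h : (Fin n → ℂ) × ℝ), ∀ z ∈ siegel n, a (hact h z) = a z) ↔
      ∃ f : ℝ → ℂ, Measurable f ∧
        ∀ z ∈ siegel n, a z = f (z.2.im - ∑ j, Complex.normSq (z.1 j)) := by
  constructor
  · intro hinv
    refine ⟨fun s => a (0, Complex.I * (s : ℂ)), ?_, ?_⟩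
    · exact ha.comp (measurable_const.prodMk (measurable_const.mul Complex.measurable_ofReal))
    · intro z hz
      have := hinv (-z.1, -z.2.re) z hz
      rw [hact_special] at this
      exact this.symm
  · rintro ⟨f, hf, hfa⟩ h z hz
    have hz' : hact h z ∈ siegel n := by
      have := hact_invar h z
      simp only [siegel, Set.mem_setOf_eq] at hz ⊢
      linarith
    rw [hfa _ hz', hfa _ hz, hact_invar]
end

section
/- The map μ₀ : D_{n+1} → ℂⁿ × ℝ given by μ₀(z) = (4iz', 1) is equivariant for the Heisenberg action on D_{n+1} and the representation ρ(w',t)(z',s) = (z' + 4is·w', s): that is, μ₀((w',t)·z) = ρ(w',t)(μ₀(z)) for all (w',t) ∈ ℍₙ, z ∈ D_{n+1}. Consequently the moment map μ(z) = −(4iz',1) / (2(Im(z_{n+1}) − |z'|²)) is ρ-equivariant. -/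
/-- The representation `ρ(w',t)(z',s) = (z' + 4is·w', s)` on `ℂⁿ × ℝ`. -/
noncomputable def hRho {n : ℕ} (h : (Fin n → ℂ) × ℝ) (X : (Fin n → ℂ) × ℝ) :
    (Fin n → ℂ) × ℝ :=
  (fun j => X.1 j + 4 * X.2 * Complex.I * h.1 j, X.2)

/-- `μ₀(z) = (4iz', 1)`. -/
noncomputable def mu0 {n : ℕ} (z : (Fin n → ℂ) × ℂ) : (Fin n → ℂ) × ℝ :=
  (fun j => 4 * Complex.I * z.1 j, (1 : ℝ))

/-- The moment map `μ(z) = −(4iz',1) / (2(Im(z_{n+1}) − |z'|²))`. -/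
noncomputable def muH {n : ℕ} (z : (Fin n → ℂ) × ℂ) : (Fin n → ℂ) × ℝ :=
  (fun j => -(4 * Complex.I * z.1 j) /
      ((2 * (z.2.im - ∑ k, Complex.normSq (z.1 k)) : ℝ) : ℂ),
    -(1 : ℝ) / (2 * (z.2.im - ∑ k, Complex.normSq (z.1 k))))

open Complex

noncomputable def siegelHeight {n : ℕ} (z : (Fin n → ℂ) × ℂ) : ℝ :=
  z.2.im - ∑ k, normSq (z.1 k)

section

variable {n : ℕ} (h : (Fin n → ℂ) × ℝ)

theorem siegelHeight_hact (z : (Fin n → ℂ) × ℂ) : siegelHeight (hact h z) = siegelHeight z := by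
  have hnormSq : ∀ k, normSq (z.1 k + h.1 k)
      = normSq (z.1 k) + normSq (h.1 k) + 2 * (z.1 k * (starRingEnd ℂ) (h.1 k)).re :=
    fun k => normSq_add _ _
  have hcross (w : ℂ) : (2 * I * w).im = 2 * w.re := by simp
  simp only [siegelHeight, hact, Pi.add_apply, hnormSq, Finset.sum_add_distrib,
    ← Finset.mul_sum, ← re_sum, hcross, add_im, mul_im, ofReal_im, ofReal_re, I_re, I_im]
  ring

theorem mu0_hact (z : (Fin n → ℂ) × ℂ) : mu0 (hact h z) = hRho h (mu0 z) := by
  refine Prod.ext (funext fun j => ?_) rfl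
  simp only [mu0, hact, hRho, Pi.add_apply, ofReal_one]
  ring

theorem hRho_smul (c : ℝ) (X : (Fin n → ℂ) × ℝ) : hRho h (c • X) = c • hRho h X := by
  refine Prod.ext (funext fun j => ?_) rfl
  simp only [hRho, Prod.smul_fst, Prod.smul_snd, Pi.smul_apply, real_smul, smul_eq_mul,
    ofReal_mul]
  ring

end

theorem muH_eq_smul_mu0 {n : ℕ} (z : (Fin n → ℂ) × ℂ) :
    muH z = (-(2 * siegelHeight z)⁻¹) • mu0 z := by
  refine Prod.ext (funext fun j => ?_) ?_
  · simp only [muH, mu0, siegelHeight, Prod.smul_fst, Pi.smul_apply, real_smul, ofReal_neg,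
      ofReal_inv]
    ring
  · simp only [muH, mu0, siegelHeight, Prod.smul_snd, smul_eq_mul]
    ring

/-- `μ₀` is `ρ`-equivariant for the Heisenberg action on the Siegel domain, and
consequently so is the moment map `μ`. -/
theorem heisenberg_moment_map_equivariance (n : ℕ) :
    (∀ (h : (Fin n → ℂ) × ℝ), ∀ z ∈ siegel n, mu0 (hact h z) = hRho h (mu0 z)) ∧
    (∀ (h : (Fin n → ℂ) × ℝ), ∀ z ∈ siegel n, muH (hact h z) = hRho h (muH z)) := by
  refine ⟨fun h z _ => mu0_hact h z, fun h z _ => ?_⟩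
  rw [muH_eq_smul_mu0, muH_eq_smul_mu0, siegelHeight_hact, mu0_hact, hRho_smul]
end
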